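/- arXiv:1504.03030 — 3 statements merged into one kernel-verified Lean document; each statement's English description precedes it below -/
import Mathlib

section
/- Let η₀ > 0, let k ∈ ℝ³ with k ≠ 0, let Σ be a real symmetric 3×3 matrix, and set u := (i/(η₀|k|)) (I − kkᵀ/|k|²) Σ (k/|k|) ∈ ℂ³. Then the Fourier transform of the symmetric gradient, namely the complex 3×3 matrix (i/2)(u kᵀ + k uᵀ), equals −(1/(2η₀|k|⁴)) ( |k|² Σ kkᵀ − 2 kkᵀ Σ kkᵀ + |k|² kkᵀ Σ ). -/
open Matrix

/-- The explicit solution `u = (i/(η₀|k|)) (I − kkᵀ/|k|²) Σ (k/|k|)` of the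
Fourier-transformed Stokes system. -/
noncomputable def stokesVelocity (η₀ : ℝ) (k : Fin 3 → ℝ)
    (S : Matrix (Fin 3) (Fin 3) ℝ) : Fin 3 → ℂ :=
  fun i => (Complex.I / (η₀ * Real.sqrt (k ⬝ᵥ k))) *
    (((((1 : Matrix (Fin 3) (Fin 3) ℝ)
        - (Real.sqrt (k ⬝ᵥ k) ^ 2)⁻¹ • Matrix.vecMulVec k k) * S).mulVec
      ((Real.sqrt (k ⬝ᵥ k))⁻¹ • k)) i : ℝ)

/-- The Fourier transform of the symmetric gradient,
`(i/2)(u kᵀ + k uᵀ)`, equals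
`−(1/(2η₀|k|⁴)) (|k|² Σ kkᵀ − 2 kkᵀ Σ kkᵀ + |k|² kkᵀ Σ)`. -/
theorem fourier_symmetric_gradient
    (η₀ : ℝ) (hη : 0 < η₀) (k : Fin 3 → ℝ) (hk : k ≠ 0)
    (S : Matrix (Fin 3) (Fin 3) ℝ) (hS : S.IsSymm)
    (u : Fin 3 → ℂ) (hu : u = stokesVelocity η₀ k S) :
    (Matrix.of fun i j => (Complex.I / 2) * (u i * (k j : ℂ) + (k i : ℂ) * u j))
      = ((-(1 / (2 * η₀ * Real.sqrt (k ⬝ᵥ k) ^ 4))) •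
          ((Real.sqrt (k ⬝ᵥ k) ^ 2) • (S * Matrix.vecMulVec k k)
            - (2 : ℝ) • (Matrix.vecMulVec k k * S * Matrix.vecMulVec k k)
            + (Real.sqrt (k ⬝ᵥ k) ^ 2) • (Matrix.vecMulVec k k * S))).map
        (fun x => (x : ℂ)) := by
  subst hu
  have h0 : k ⬝ᵥ k ≠ 0 := fun h => hk (dotProduct_self_eq_zero.mp h)
  have hkk : (0:ℝ) < k ⬝ᵥ k :=
    lt_of_le_of_ne (Finset.sum_nonneg fun i _ => mul_self_nonneg _) (Ne.symm h0)
  have hr : Real.sqrt (k ⬝ᵥ k) ≠ 0 := ne_of_gt (Real.sqrt_pos.mpr hkk)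
  have hrC : (Real.sqrt (k ⬝ᵥ k) : ℂ) ≠ 0 := by exact_mod_cast hr
  have hηC : (η₀ : ℂ) ≠ 0 := by exact_mod_cast hη.ne'
  have h1 : ∀ i j, (S * Matrix.vecMulVec k k) i j = (S.mulVec k) i * k j := by
    intro i j
    simp only [Matrix.mul_apply, Matrix.vecMulVec_apply, Matrix.mulVec,
      dotProduct, Fin.sum_univ_three]
    ring
  have h2 : ∀ i j, (Matrix.vecMulVec k k * S) i j = k i * (S.mulVec k) j := by
    intro i j
    simp only [Matrix.mul_apply, Matrix.vecMulVec_apply, Matrix.mulVec,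
      dotProduct, Fin.sum_univ_three]
    rw [hS.apply j 0, hS.apply j 1, hS.apply j 2]
    ring
  have haux : ∀ i, ((Matrix.vecMulVec k k * S).mulVec k) i
      = k i * (k ⬝ᵥ S.mulVec k) := by
    intro i
    simp only [Matrix.mulVec, dotProduct, Matrix.mul_apply,
      Matrix.vecMulVec_apply, Fin.sum_univ_three]
    rw [hS.apply 0 1, hS.apply 0 2, hS.apply 1 2]
    ring
  have h3 : ∀ i j, (Matrix.vecMulVec k k * S * Matrix.vecMulVec k k) i j
      = k i * (k ⬝ᵥ S.mulVec k) * k j := by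
    intro i j
    have := h1
    simp only [Matrix.mul_apply, Matrix.vecMulVec_apply, Matrix.mulVec,
      dotProduct, Fin.sum_univ_three] at haux ⊢
    rw [hS.apply 0 1, hS.apply 0 2, hS.apply 1 2]
    ring
  have hsv : ∀ i, stokesVelocity η₀ k S i
      = (Complex.I / (η₀ * Real.sqrt (k ⬝ᵥ k))) *
        (((Real.sqrt (k ⬝ᵥ k))⁻¹ *
          ((S.mulVec k) i - (Real.sqrt (k ⬝ᵥ k) ^ 2)⁻¹ *
            (k i * (k ⬝ᵥ S.mulVec k))) : ℝ)) := by
    intro i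
    unfold stokesVelocity
    congr 1
    norm_cast
    rw [Matrix.sub_mul, Matrix.smul_mul, one_mul, Matrix.sub_mulVec,
      Matrix.mulVec_smul, Matrix.mulVec_smul, Matrix.smul_mulVec]
    simp only [Pi.sub_apply, Pi.smul_apply, smul_eq_mul, haux]
    ring
  ext i j
  simp only [Matrix.map_apply, Matrix.of_apply, Matrix.smul_apply, Matrix.add_apply,
    Matrix.sub_apply, smul_eq_mul, h1, h2, h3, hsv]
  generalize hg : Real.sqrt (k ⬝ᵥ k) = r at hrC ⊢
  push_cast
  field_simp [hrC, hηC]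
  ring_nf
  simp only [Complex.I_sq]
  ring
end

section
/- Let γ ∈ ℝ and define P¹(α,β) := −(3/(8π)) sin²β cos(2α). Then P¹ solves the order-B equation of the steady-state kinetic hierarchy: (γ/2) [ −3·(1/(4π)) sin(2α) sin²β + ∂_α P¹(α,β) ] = 0 for all α, β ∈ ℝ, and moreover P¹ has zero mean over the sphere: ∫₀^{2π} ∫₀^{π} P¹(α,β) sin β dβ dα = 0. -/
/-! `P¹` is `sin²β` times `cos 2α`: its `α`-derivative cancels the forcing term
`sin 2α sin²β` exactly, and its mean over the sphere factors through
`∫₀^{2π} cos 2α dα = 0`. -/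

open MeasureTheory intervalIntegral

/-- The first-order (in the Bretherton constant) correction to the orientation
distribution: `P¹(α,β) = −(3/(8π)) sin²β cos(2α)`. -/
noncomputable def P1 (α β : ℝ) : ℝ :=
  -(3 / (8 * Real.pi)) * Real.sin β ^ 2 * Real.cos (2 * α)

open Real

theorem integral_cos_int_mul_zero_two_pi {n : ℤ} (hn : n ≠ 0) :
    ∫ x in (0:ℝ)..(2 * π), cos (n * x) = 0 := by
  have hsin : sin (n * (2 * π)) = 0 := by
    rw [← mul_assoc, mul_comm (n : ℝ) 2]
    exact_mod_cast sin_int_mul_pi (2 * n)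
  rw [integral_comp_mul_left (fun x => cos x) (Int.cast_ne_zero.mpr hn), integral_cos, hsin]
  simp

theorem hasDerivAt_P1_fst (α β : ℝ) :
    HasDerivAt (fun a => P1 a β) (3 / (4 * π) * sin β ^ 2 * sin (2 * α)) α := by
  have hcos : HasDerivAt (fun a => cos (2 * a)) (-sin (2 * α) * 2) α :=
    (hasDerivAt_cos (2 * α)).comp α ((hasDerivAt_id α).const_mul 2 |>.congr_deriv (mul_one 2))
  exact (hcos.const_mul (-(3 / (8 * π)) * sin β ^ 2)).congr_deriv (by ring)

theorem integral_P1_mul_sin (α : ℝ) :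
    ∫ β in (0:ℝ)..π, P1 α β * sin β
      = (-(3 / (8 * π)) * ∫ β in (0:ℝ)..π, sin β ^ 3) * cos (2 * α) := by
  rw [← intervalIntegral.integral_const_mul, ← intervalIntegral.integral_mul_const]
  congr 1 with β
  unfold P1
  ring

/-- `P¹` solves the order-`B` equation
`(γ/2)[−3(1/(4π)) sin(2α) sin²β + ∂_α P¹] = 0` and has zero mean over the
sphere. -/
theorem P1_solves_orderB (γ : ℝ) :
    (∀ α β : ℝ,
      γ / 2 * (-3 * (1 / (4 * Real.pi)) * Real.sin (2 * α) * Real.sin β ^ 2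
        + deriv (fun a => P1 a β) α) = 0)
    ∧ (∫ α in (0:ℝ)..(2 * Real.pi), ∫ β in (0:ℝ)..Real.pi,
        P1 α β * Real.sin β) = 0 := by
  constructor
  · intro α β
    rw [(hasDerivAt_P1_fst α β).deriv]
    ring
  · have hcos : ∫ α in (0:ℝ)..(2 * π), cos (2 * α) = 0 := by
      exact_mod_cast integral_cos_int_mul_zero_two_pi (n := 2) two_ne_zero
    simp only [integral_P1_mul_sin, intervalIntegral.integral_const_mul, hcos, mul_zero]
end

section
/- Let γ ≠ 0 and κ, A, C, D ∈ ℝ, and let P¹(α,β) := −(3/(8π)) sin²β cos(2α). Then there exist unique real constants C₁, C₂, C₃ such that the function P²(α,β) := C₁ sin⁴β cos(4α) + C₂ sin²β cos(2α) + C₃ sin²β sin(2α) satisfies, for all α ∈ ℝ and all β ∈ (0,π), the order-B² equation 0 = (γ/2) sin(2α) sin β cos β ∂_β P¹ − (3γ/2) sin(2α) sin²β P¹ + (γ/2) ∂_α P² + (γ/2) cos(2α) ∂_α P¹ + κ ( A sin²β cos(2α) + C sin²β sin(2α) ) + 12 κ D sin²β sin(2α); moreover the coefficient of sin²β sin(2α)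 is C₃ = −κA/γ. -/
open Real

/-- The second-order ansatz
`P²(α,β) = C₁ sin⁴β cos(4α) + C₂ sin²β cos(2α) + C₃ sin²β sin(2α)` with
coefficients `c = (C₁, C₂, C₃)`. -/
noncomputable def P2 (c : ℝ × ℝ × ℝ) (α β : ℝ) : ℝ :=
  c.1 * Real.sin β ^ 4 * Real.cos (4 * α)
    + c.2.1 * Real.sin β ^ 2 * Real.cos (2 * α)
    + c.2.2 * Real.sin β ^ 2 * Real.sin (2 * α)

/-- The order-`B²` equation of the steady-state kinetic hierarchy, as a
condition on the coefficient triple `c = (C₁, C₂, C₃)`. -/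
noncomputable def OrderB2Eq (γ κ A C D : ℝ) (c : ℝ × ℝ × ℝ) : Prop :=
  ∀ α : ℝ, ∀ β ∈ Set.Ioo (0 : ℝ) Real.pi,
    (0 : ℝ) =
      γ / 2 * Real.sin (2 * α) * Real.sin β * Real.cos β
          * deriv (fun b => P1 α b) β
        - 3 * γ / 2 * Real.sin (2 * α) * Real.sin β ^ 2 * P1 α β
        + γ / 2 * deriv (fun a => P2 c a β) α
        + γ / 2 * Real.cos (2 * α) * deriv (fun a => P1 a β) α
        + κ * (A * Real.sin β ^ 2 * Real.cos (2 * α)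
            + C * Real.sin β ^ 2 * Real.sin (2 * α))
        + 12 * κ * D * Real.sin β ^ 2 * Real.sin (2 * α)

/-! Substituting the ansatz turns the order-`B²` equation into a trigonometric polynomial in the
three modes `sin⁴β sin 4α`, `sin²β cos 2α`, `sin²β sin 2α` (using `cos²β = 1 - sin²β` and
`sin 4α = 2 sin 2α cos 2α`). These modes are linearly independent, so each coefficient must vanish,
and since `γ ≠ 0` the resulting diagonal linear system fixes `C₁, C₂, C₃`. -/

lemma hasDerivAt_cos_const_mul (k x : ℝ) :
    HasDerivAt (fun x => Real.cos (k * x)) (-Real.sin (k * x) * k) x := by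
  simpa using ((hasDerivAt_id x).const_mul k).cos

lemma hasDerivAt_sin_const_mul (k x : ℝ) :
    HasDerivAt (fun x => Real.sin (k * x)) (Real.cos (k * x) * k) x := by
  simpa using ((hasDerivAt_id x).const_mul k).sin

lemma deriv_P1_polar (α β : ℝ) :
    deriv (fun b => P1 α b) β
      = -(3 / (4 * Real.pi)) * Real.sin β * Real.cos β * Real.cos (2 * α) := by
  have h : HasDerivAt (fun b => P1 α b) _ β :=
    (((Real.hasDerivAt_sin β).pow 2).const_mul (-(3 / (8 * Real.pi)))).mul_const (Real.cos (2 * α))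
  rw [h.deriv]
  ring

lemma deriv_P1_azimuthal (α β : ℝ) :
    deriv (fun a => P1 a β) α = 3 / (4 * Real.pi) * Real.sin β ^ 2 * Real.sin (2 * α) := by
  have h : HasDerivAt (fun a => P1 a β) _ α :=
    (hasDerivAt_cos_const_mul 2 α).const_mul (-(3 / (8 * Real.pi)) * Real.sin β ^ 2)
  rw [h.deriv]
  ring

lemma deriv_P2_azimuthal (c : ℝ × ℝ × ℝ) (α β : ℝ) :
    deriv (fun a => P2 c a β) α =
      -4 * c.1 * Real.sin β ^ 4 * Real.sin (4 * α)
        - 2 * c.2.1 * Real.sin β ^ 2 * Real.sin (2 * α)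
        + 2 * c.2.2 * Real.sin β ^ 2 * Real.cos (2 * α) := by
  have h : HasDerivAt (fun a => P2 c a β) _ α :=
    (((hasDerivAt_cos_const_mul 4 α).const_mul (c.1 * Real.sin β ^ 4)).add
      ((hasDerivAt_cos_const_mul 2 α).const_mul (c.2.1 * Real.sin β ^ 2))).add
      ((hasDerivAt_sin_const_mul 2 α).const_mul (c.2.2 * Real.sin β ^ 2))
  rw [h.deriv]
  ring

lemma orderB2_rhs_eq (γ κ A C D : ℝ) (c : ℝ × ℝ × ℝ) (α β : ℝ) :
    γ / 2 * Real.sin (2 * α) * Real.sin β * Real.cos β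
          * deriv (fun b => P1 α b) β
        - 3 * γ / 2 * Real.sin (2 * α) * Real.sin β ^ 2 * P1 α β
        + γ / 2 * deriv (fun a => P2 c a β) α
        + γ / 2 * Real.cos (2 * α) * deriv (fun a => P1 a β) α
        + κ * (A * Real.sin β ^ 2 * Real.cos (2 * α)
            + C * Real.sin β ^ 2 * Real.sin (2 * α))
        + 12 * κ * D * Real.sin β ^ 2 * Real.sin (2 * α)
      = (15 * γ / (32 * Real.pi) - 2 * γ * c.1) * Real.sin β ^ 4 * Real.sin (4 * α)
        + (γ * c.2.2 + κ * A) * Real.sin β ^ 2 * Real.cos (2 * α)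
        + (κ * C + 12 * κ * D - γ * c.2.1) * Real.sin β ^ 2 * Real.sin (2 * α) := by
  have h4 : Real.sin (4 * α) = 2 * Real.sin (2 * α) * Real.cos (2 * α) := by
    rw [show (4 : ℝ) * α = 2 * (2 * α) by ring, Real.sin_two_mul]
  rw [deriv_P1_polar, deriv_P1_azimuthal, deriv_P2_azimuthal, P1]
  linear_combination (-(15 * γ / (32 * Real.pi)) * Real.sin β ^ 4) * h4
    + (-(3 * γ / (8 * Real.pi)) * Real.sin (2 * α) * Real.cos (2 * α) * Real.sin β ^ 2)
      * Real.cos_sq' β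

lemma eq_zero_of_sin_four_cos_two_sin_two {a b c : ℝ}
    (h : ∀ α : ℝ, a * Real.sin (4 * α) + b * Real.cos (2 * α) + c * Real.sin (2 * α) = 0) :
    a = 0 ∧ b = 0 ∧ c = 0 := by
  have h0 := h 0
  have h1 := h (Real.pi / 4)
  have h2 := h (Real.pi / 8)
  rw [show 4 * (Real.pi / 4) = Real.pi by ring, show 2 * (Real.pi / 4) = Real.pi / 2 by ring,
    Real.sin_pi, Real.cos_pi_div_two, Real.sin_pi_div_two] at h1
  rw [show 4 * (Real.pi / 8) = Real.pi / 2 by ring, show 2 * (Real.pi / 8) = Real.pi / 4 by ring,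
    Real.sin_pi_div_two, Real.cos_pi_div_four, Real.sin_pi_div_four] at h2
  simp only [mul_zero, Real.sin_zero, Real.cos_zero] at h0
  have hb : b = 0 := by linarith
  have hc : c = 0 := by linarith
  refine ⟨?_, hb, hc⟩
  rw [hb, hc] at h2
  linarith

-- Restricting to the equator `β = π/2` already determines all three coefficients.
lemma orderB2Eq_iff_coeffs_eq_zero (γ κ A C D : ℝ) (c : ℝ × ℝ × ℝ) :
    OrderB2Eq γ κ A C D c ↔
      15 * γ / (32 * Real.pi) - 2 * γ * c.1 = 0 ∧ γ * c.2.2 + κ * A = 0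
        ∧ κ * C + 12 * κ * D - γ * c.2.1 = 0 := by
  constructor
  · intro h
    refine eq_zero_of_sin_four_cos_two_sin_two fun α => ?_
    have hα := h α (Real.pi / 2) ⟨by positivity, by linarith [Real.pi_pos]⟩
    rw [orderB2_rhs_eq, Real.sin_pi_div_two] at hα
    linarith
  · rintro ⟨h₁, h₂, h₃⟩ α β -
    rw [orderB2_rhs_eq, h₁, h₂, h₃]
    ring

lemma orderB2Eq_iff_eq (κ A C D : ℝ) {γ : ℝ} (hγ : γ ≠ 0) (c : ℝ × ℝ × ℝ) :
    OrderB2Eq γ κ A C D c ↔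
      c = (15 / (64 * Real.pi), κ * (C + 12 * D) / γ, -(κ * A) / γ) := by
  obtain ⟨c₁, c₂, c₃⟩ := c
  have hπ : Real.pi ≠ 0 := Real.pi_ne_zero
  have hC₁ : 15 * γ / (32 * Real.pi) - 2 * γ * c₁ = (-2 * γ) * (c₁ - 15 / (64 * Real.pi)) := by
    field_simp
    ring
  rw [orderB2Eq_iff_coeffs_eq_zero, Prod.mk.injEq, Prod.mk.injEq, hC₁, mul_eq_zero, sub_eq_zero,
    eq_div_iff hγ, eq_div_iff hγ]
  refine and_congr (or_iff_right (by simpa using hγ)) (and_comm.trans (and_congr ?_ ?_)) <;>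
    constructor <;> intro h <;> linarith

/-- For `γ ≠ 0` there are unique constants `C₁, C₂, C₃` such
that the ansatz `P²` solves the order-`B²` equation; moreover the coefficient
of `sin²β sin(2α)` is `C₃ = −κA/γ`. -/
theorem orderB2_unique_coefficients (γ κ A C D : ℝ) (hγ : γ ≠ 0) :
    (∃! c : ℝ × ℝ × ℝ, OrderB2Eq γ κ A C D c)
    ∧ (∀ c : ℝ × ℝ × ℝ, OrderB2Eq γ κ A C D c → c.2.2 = -(κ * A) / γ) := by
  simp only [orderB2Eq_iff_eq κ A C D hγ]
  exact ⟨existsUnique_eq, fun c hc => by rw [hc]⟩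
end
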